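/- arXiv:2308.15442 — 2 statements merged into one kernel-verified Lean document; each statement's English description precedes it below -/
import Mathlib

section
/- Let H₀ and H₁ be N×N Hermitian positive-semidefinite complex matrices, let P₀ be an N×N orthogonal projector (P₀ = P₀* = P₀²) that commutes with H₀, let ψ₀ ∈ ℂ^N be a unit vector with H₀ψ₀ = 0, let p ≥ 1, let β, γ : Fin p → ℝ with |γ_j| ≤ 2π for all j, and let ψ_p be the QAOA state after p rounds. Then p · 2π · ‖P₀H₁ − H₁P₀‖ ≥ |⟨ψ_p, P₀ψ_p⟩ − ⟨ψ₀, P₀ψ₀⟩|. Moreover the sharper bound (Σ_{j=1}^{p} |γ_j|) · ‖P₀H₁ − H₁P₀‖ ≥ |⟨ψ_p, P₀ψ_p⟩ − ⟨ψ₀, P₀ψ₀⟩| holds. -/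
open Matrix Complex
open scoped ComplexOrder

/-- The spectral norm (ℓ²→ℓ² operator norm) of a matrix. -/
noncomputable def specNorm {ι : Type*} [Fintype ι] [DecidableEq ι] {𝕜 : Type*} [RCLike 𝕜]
    (M : Matrix ι ι 𝕜) : ℝ :=
  ‖Matrix.toEuclideanCLM (𝕜 := 𝕜) M‖

/-- The QAOA state after `p` rounds:
`ψ_p = exp(-i β_p H₀) exp(-i γ_p H₁) ⋯ exp(-i β_1 H₀) exp(-i γ_1 H₁) ψ₀`. -/
noncomputable def qaoaState {ι : Type*} [Fintype ι] [DecidableEq ι]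
    (H0 H1 : Matrix ι ι ℂ) (p : ℕ) (β γ : Fin p → ℝ) (ψ0 : ι → ℂ) : ι → ℂ :=
  (List.ofFn (fun j : Fin p =>
      NormedSpace.exp ((-(β j.rev : ℂ) * Complex.I) • H0) *
      NormedSpace.exp ((-(γ j.rev : ℂ) * Complex.I) • H1))).prod.mulVec ψ0

/-!
Conjugation by a unitary `U` moves the expectation of `P₀` in a unit state by at most
`‖U⋆ P₀ U - P₀‖`, and this defect is subadditive along products of unitaries. The mixer
`exp(-iβH₀)` commutes with `P₀` and contributes nothing; for the phase `exp(-iγH₁)`,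
differentiating `t ↦ exp(itγH₁) P₀ exp(-itγH₁)` bounds the defect by `|γ| ‖P₀H₁ - H₁P₀‖`.
All of this takes place in an arbitrary C⋆-algebra, of which matrices with the ℓ² operator norm
are an instance.
-/

open NormedSpace

section CStarAlgebra

variable {A : Type*} [CStarAlgebra A]

-- The library version needs a `NormedAlgebra ℚ A` instance, which `CStarAlgebra` does not provide.
lemma exp_mem_unitary_of_mem_skewAdjoint' {X : A} (hX : X ∈ skewAdjoint A) :
    exp X ∈ unitary A :=
  letI : NormedAlgebra ℚ A := .restrictScalars ℚ ℂ A
  exp_mem_unitary_of_mem_skewAdjoint hX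

lemma norm_star_exp_mul_mul_exp_sub_le {X : A} (hX : X ∈ skewAdjoint A) (P : A) :
    ‖star (exp X) * P * exp X - P‖ ≤ ‖P * X - X * P‖ := by
  set f : ℝ → A := fun t => exp (t • -X) * P * exp (t • X)
  set f' : ℝ → A := fun t => exp (t • -X) * (P * X - X * P) * exp (t • X)
  have hderiv (t : ℝ) : HasDerivAt f (f' t) t := by
    refine (((hasDerivAt_exp_smul_const (-X) t).mul_const P).mul
      (hasDerivAt_exp_smul_const' X t)).congr_deriv ?_
    simp only [f']
    noncomm_ring
  have hbound (t : ℝ) : ‖f' t‖ ≤ ‖P * X - X * P‖ := by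
    have hneg : t • -X ∈ skewAdjoint A := skewAdjoint.smul_mem t (neg_mem hX)
    have hpos : t • X ∈ skewAdjoint A := skewAdjoint.smul_mem t hX
    rw [CStarRing.norm_mul_mem_unitary _ (exp_mem_unitary_of_mem_skewAdjoint' hpos),
      CStarRing.norm_mem_unitary_mul _ (exp_mem_unitary_of_mem_skewAdjoint' hneg)]
  have hmvt := norm_image_sub_le_of_norm_deriv_le_segment_01'
    (fun t _ => (hderiv t).hasDerivWithinAt) (fun t _ => hbound t)
  simpa [f, star_exp, skewAdjoint.mem_iff.mp hX] using hmvt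

lemma star_exp_mul_mul_exp_of_commute {X P : A} (hX : X ∈ skewAdjoint A) (h : Commute P X) :
    star (exp X) * P * exp X = P := by
  rw [mul_assoc, h.exp_right.eq, ← mul_assoc,
    (exp_mem_unitary_of_mem_skewAdjoint' hX).1, one_mul]

lemma norm_star_prod_mul_mul_prod_sub_le (P : A) {l : List A} (hl : ∀ u ∈ l, u ∈ unitary A) :
    ‖star l.prod * P * l.prod - P‖ ≤ (l.map fun u => ‖star u * P * u - P‖).sum := by
  induction l with
  | nil => simp
  | cons u l ih =>
    have hl' : ∀ v ∈ l, v ∈ unitary A := fun v hv => hl v (List.mem_cons_of_mem u hv)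
    have hW : l.prod ∈ unitary A := list_prod_mem hl'
    have hsplit : star (u :: l).prod * P * (u :: l).prod - P =
        star l.prod * (star u * P * u - P) * l.prod + (star l.prod * P * l.prod - P) := by
      rw [List.prod_cons, star_mul]
      noncomm_ring
    rw [hsplit, List.map_cons, List.sum_cons]
    refine (norm_add_le _ _).trans (add_le_add (le_of_eq ?_) (ih hl'))
    rw [CStarRing.norm_mul_mem_unitary _ hW, CStarRing.norm_mem_unitary_mul _ (Unitary.star_mem hW)]

end CStarAlgebra

section Qaoa

open Complex

variable {A : Type*} [CStarAlgebra A]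

noncomputable def qaoaLayer (H0 H1 : A) (β γ : ℝ) : A :=
  exp ((-(β : ℂ) * I) • H0) * exp ((-(γ : ℂ) * I) • H1)

lemma neg_ofReal_mul_I_smul_mem_skewAdjoint {H : A} (hH : IsSelfAdjoint H) (r : ℝ) :
    (-(r : ℂ) * I) • H ∈ skewAdjoint A :=
  hH.smul_mem_skewAdjoint (by simp [skewAdjoint.mem_iff])

variable {H0 H1 : A} (hH0 : IsSelfAdjoint H0) (hH1 : IsSelfAdjoint H1)
include hH0 hH1

lemma qaoaLayer_mem_unitary (β γ : ℝ) : qaoaLayer H0 H1 β γ ∈ unitary A :=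
  mul_mem (exp_mem_unitary_of_mem_skewAdjoint' (neg_ofReal_mul_I_smul_mem_skewAdjoint hH0 β))
    (exp_mem_unitary_of_mem_skewAdjoint' (neg_ofReal_mul_I_smul_mem_skewAdjoint hH1 γ))

lemma norm_star_qaoaLayer_mul_mul_sub_le {P : A} (hP : Commute P H0) (β γ : ℝ) :
    ‖star (qaoaLayer H0 H1 β γ) * P * qaoaLayer H0 H1 β γ - P‖ ≤ |γ| * ‖P * H1 - H1 * P‖ := by
  set Uβ := exp ((-(β : ℂ) * I) • H0)
  set Uγ := exp ((-(γ : ℂ) * I) • H1)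
  have hmixer : star Uβ * P * Uβ = P :=
    star_exp_mul_mul_exp_of_commute (neg_ofReal_mul_I_smul_mem_skewAdjoint hH0 β)
      (hP.smul_right _)
  calc ‖star (Uβ * Uγ) * P * (Uβ * Uγ) - P‖ = ‖star Uγ * (star Uβ * P * Uβ) * Uγ - P‖ := by
        rw [star_mul]; noncomm_ring
    _ = ‖star Uγ * P * Uγ - P‖ := by rw [hmixer]
    _ ≤ ‖P * ((-(γ : ℂ) * I) • H1) - ((-(γ : ℂ) * I) • H1) * P‖ :=
        norm_star_exp_mul_mul_exp_sub_le (neg_ofReal_mul_I_smul_mem_skewAdjoint hH1 γ) P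
    _ = |γ| * ‖P * H1 - H1 * P‖ := by
        rw [mul_smul_comm, smul_mul_assoc, ← smul_sub, norm_smul, norm_mul, norm_neg, norm_I,
          mul_one, norm_real, Real.norm_eq_abs]

lemma norm_star_prod_qaoaLayer_mul_mul_sub_le {P : A} (hP : Commute P H0) {p : ℕ}
    (β γ : Fin p → ℝ) :
    ‖star (List.ofFn fun j => qaoaLayer H0 H1 (β j) (γ j)).prod * P *
        (List.ofFn fun j => qaoaLayer H0 H1 (β j) (γ j)).prod - P‖ ≤
      (∑ j, |γ j|) * ‖P * H1 - H1 * P‖ := by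
  refine (norm_star_prod_mul_mul_prod_sub_le P ?_).trans ?_
  · simpa [List.mem_ofFn] using fun j => qaoaLayer_mem_unitary hH0 hH1 (β j) (γ j)
  · rw [List.map_ofFn, List.sum_ofFn, Finset.sum_mul]
    exact Finset.sum_le_sum fun j _ => norm_star_qaoaLayer_mul_mul_sub_le hH0 hH1 hP (β j) (γ j)

end Qaoa

section Matrix

variable {n : Type*} [Fintype n]

lemma star_mulVec_dotProduct_mulVec {R : Type*} [Semiring R] [StarRing R] (W P : Matrix n n R)
    (ψ : n → R) :
    star (W *ᵥ ψ) ⬝ᵥ (P *ᵥ (W *ᵥ ψ)) = star ψ ⬝ᵥ ((star W * P * W) *ᵥ ψ) := by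
  rw [star_mulVec, ← dotProduct_mulVec, mulVec_mulVec, mulVec_mulVec, star_eq_conjTranspose,
    Matrix.mul_assoc]

variable [DecidableEq n] {𝕜 : Type*} [RCLike 𝕜]

open scoped Matrix.Norms.L2Operator in
lemma norm_star_dotProduct_mulVec_le (M : Matrix n n 𝕜) {ψ : n → 𝕜} (hψ : star ψ ⬝ᵥ ψ = 1) :
    ‖star ψ ⬝ᵥ (M *ᵥ ψ)‖ ≤ ‖M‖ := by
  have hunit : ‖WithLp.toLp 2 ψ‖ = 1 := by
    refine (pow_left_inj₀ (norm_nonneg _) zero_le_one two_ne_zero).mp ?_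
    rw [@norm_sq_eq_re_inner 𝕜, EuclideanSpace.inner_toLp_toLp, dotProduct_comm, hψ, RCLike.one_re,
      one_pow]
  calc ‖star ψ ⬝ᵥ (M *ᵥ ψ)‖ = ‖inner 𝕜 (WithLp.toLp 2 ψ) (WithLp.toLp 2 (M *ᵥ ψ))‖ := by
        rw [EuclideanSpace.inner_toLp_toLp, dotProduct_comm]
    _ ≤ ‖WithLp.toLp 2 ψ‖ * ‖WithLp.toLp 2 (M *ᵥ ψ)‖ := norm_inner_le_norm _ _
    _ ≤ ‖M‖ := by
        rw [hunit, one_mul]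
        simpa [hunit] using M.l2_opNorm_mulVec (WithLp.toLp 2 ψ)

end Matrix

theorem qaoa_projector_overlap_change_bound_general
    {N : ℕ} (H0 H1 : Matrix (Fin N) (Fin N) ℂ)
    (hH0 : H0.PosSemidef) (hH1 : H1.PosSemidef)
    (P0 : Matrix (Fin N) (Fin N) ℂ)
    (hP0comm : P0 * H0 = H0 * P0)
    (ψ0 : Fin N → ℂ) (hψ0 : star ψ0 ⬝ᵥ ψ0 = 1)
    (p : ℕ) (β γ : Fin p → ℝ)
    (hγ : ∀ j, |γ j| ≤ 2 * Real.pi)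
    (ψp : Fin N → ℂ) (hψp : ψp = qaoaState H0 H1 p β γ ψ0) :
    (p : ℝ) * (2 * Real.pi) * specNorm (P0 * H1 - H1 * P0) ≥
        |(star ψp ⬝ᵥ (P0 *ᵥ ψp)).re - (star ψ0 ⬝ᵥ (P0 *ᵥ ψ0)).re| ∧
      (∑ j, |γ j|) * specNorm (P0 * H1 - H1 * P0) ≥
        |(star ψp ⬝ᵥ (P0 *ᵥ ψp)).re - (star ψ0 ⬝ᵥ (P0 *ᵥ ψ0)).re| := by
  -- `specNorm` is by definition the ℓ² operator norm, which makes matrices a C⋆-algebra.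
  open scoped Matrix.Norms.L2Operator in
  set W := (List.ofFn fun j : Fin p => qaoaLayer H0 H1 (β j.rev) (γ j.rev)).prod
  have hchange : star ψp ⬝ᵥ (P0 *ᵥ ψp) - star ψ0 ⬝ᵥ (P0 *ᵥ ψ0) =
      star ψ0 ⬝ᵥ ((star W * P0 * W - P0) *ᵥ ψ0) := by
    rw [show ψp = W *ᵥ ψ0 from hψp, star_mulVec_dotProduct_mulVec, sub_mulVec, dotProduct_sub]
  have hsum : ∑ j : Fin p, |γ j.rev| = ∑ j, |γ j| := Fintype.sum_equiv Fin.revPerm _ _ fun _ => rfl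
  have hbound : |(star ψp ⬝ᵥ (P0 *ᵥ ψp)).re - (star ψ0 ⬝ᵥ (P0 *ᵥ ψ0)).re| ≤
      (∑ j, |γ j|) * specNorm (P0 * H1 - H1 * P0) :=
    calc _ ≤ ‖star ψ0 ⬝ᵥ ((star W * P0 * W - P0) *ᵥ ψ0)‖ := by
          rw [← hchange, ← sub_re]; exact abs_re_le_norm _
      _ ≤ ‖star W * P0 * W - P0‖ := norm_star_dotProduct_mulVec_le _ hψ0
      _ ≤ (∑ j : Fin p, |γ j.rev|) * ‖P0 * H1 - H1 * P0‖ :=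
          norm_star_prod_qaoaLayer_mul_mul_sub_le hH0.isHermitian.isSelfAdjoint
            hH1.isHermitian.isSelfAdjoint hP0comm _ _
      _ = (∑ j, |γ j|) * specNorm (P0 * H1 - H1 * P0) := by rw [hsum]; rfl
  refine ⟨le_trans hbound ?_, hbound⟩
  gcongr
  · exact norm_nonneg _
  · calc ∑ j, |γ j| ≤ ∑ _j : Fin p, 2 * Real.pi := Finset.sum_le_sum fun j _ => hγ j
      _ = p * (2 * Real.pi) := by simp

/-- lower bound on the change of the expectation of a projector `P₀` commuting
with the mixer, in terms of the phase angles and commutator norm. -/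
theorem qaoa_projector_overlap_change_bound
    {N : ℕ} (hN : 1 ≤ N) (H0 H1 : Matrix (Fin N) (Fin N) ℂ)
    (hH0 : H0.PosSemidef) (hH1 : H1.PosSemidef)
    (P0 : Matrix (Fin N) (Fin N) ℂ)
    (hP0herm : P0.IsHermitian) (hP0idem : P0 * P0 = P0)
    (hP0comm : P0 * H0 = H0 * P0)
    (ψ0 : Fin N → ℂ) (hψ0 : star ψ0 ⬝ᵥ ψ0 = 1) (hground : H0 *ᵥ ψ0 = 0)
    (p : ℕ) (hp : 1 ≤ p) (β γ : Fin p → ℝ)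
    (hγ : ∀ j, |γ j| ≤ 2 * Real.pi)
    (ψp : Fin N → ℂ) (hψp : ψp = qaoaState H0 H1 p β γ ψ0) :
    (p : ℝ) * (2 * Real.pi) * specNorm (P0 * H1 - H1 * P0) ≥
        |(star ψp ⬝ᵥ (P0 *ᵥ ψp)).re - (star ψ0 ⬝ᵥ (P0 *ᵥ ψ0)).re| ∧
      (∑ j, |γ j|) * specNorm (P0 * H1 - H1 * P0) ≥
        |(star ψp ⬝ᵥ (P0 *ᵥ ψp)).re - (star ψ0 ⬝ᵥ (P0 *ᵥ ψ0)).re| :=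
  qaoa_projector_overlap_change_bound_general H0 H1 hH0 hH1 P0 hP0comm ψ0 hψ0 p β γ hγ ψp hψp
end

section
/- Let N ≥ 2 and S ⊆ Fin N with m = |S| satisfying 1 ≤ m ≤ N − 1. Let H₁ = I − H_C where H_C is the diagonal matrix with diagonal entries 1 for z ∈ S and 0 otherwise. Let H₀ be any N×N Hermitian positive-semidefinite matrix whose ground state is the uniform unit vector ψ₀ (all entries 1/√N) with H₀ψ₀ = 0. Let p ≥ 1, let β, γ : Fin p → ℝ with |γ_j| ≤ 2π for all j, let ψ_p be the QAOA state after p rounds, and let λ = Σ_{z ∈ S} |ψ_p(z)|². Then p · 2π · √(m(N − m)) ≥ λ(N − 2m) + m − 2√(λ(1 − λ) m (N − m)). -/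
open Matrix Complex
open scoped ComplexOrder

/-!
Follow the unnormalised overlap `‖∑ z, ψ z‖²` with the uniform superposition (it starts at `N`).
A mixer round leaves it unchanged: `H₀` is Hermitian and kills the all-ones vector `𝟙`, so
`𝟙ᵀ exp(-iβH₀) = 𝟙ᵀ`. A phase round multiplies the unmarked amplitudes by `e = exp(-iγ)`,
turning `q + r` into `q + e r` (`q`, `r` the amplitude sums over marked and unmarked states);
this lowers `‖q + r‖²` by at most `2 |e - 1| ‖q‖ ‖r‖ ≤ |γ| √(m (N - m))`, by Cauchy–Schwarz
on both parts and AM–GM. Hence after `p` rounds the overlap is at least `N - 2πp √(m (N - m))`,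
while Cauchy–Schwarz bounds it above by `(√(λ m) + √((1 - λ) (N - m)))²`.
-/

open Finset

section Matrix

variable {ι : Type*} [Fintype ι] [DecidableEq ι]

theorem Matrix.exp_mem_unitary_of_mem_skewAdjoint {𝕜 : Type*} [RCLike 𝕜] {A : Matrix ι ι 𝕜}
    (hA : A ∈ skewAdjoint (Matrix ι ι 𝕜)) : NormedSpace.exp A ∈ unitary (Matrix ι ι 𝕜) := by
  rw [← unitaryGroup, mem_unitaryGroup_iff', star_eq_conjTranspose, ← exp_conjTranspose,
    ← star_eq_conjTranspose, skewAdjoint.mem_iff.mp hA,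
    ← exp_add_of_commute _ _ (Commute.refl A).neg_left, neg_add_cancel, NormedSpace.exp_zero]

theorem Matrix.IsHermitian.exp_neg_mul_I_smul_mem_unitary {H : Matrix ι ι ℂ}
    (hH : H.IsHermitian) (t : ℝ) :
    NormedSpace.exp ((-(t : ℂ) * I) • H) ∈ unitary (Matrix ι ι ℂ) :=
  exp_mem_unitary_of_mem_skewAdjoint <| hH.isSelfAdjoint.smul_mem_skewAdjoint <| by
    simp [skewAdjoint.mem_iff]

theorem Matrix.sum_norm_sq_mulVec_of_mem_unitary {𝕜 : Type*} [RCLike 𝕜] {U : Matrix ι ι 𝕜}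
    (hU : U ∈ unitary (Matrix ι ι 𝕜)) (x : ι → 𝕜) :
    ∑ i, ‖(U *ᵥ x) i‖ ^ 2 = ∑ i, ‖x i‖ ^ 2 := by
  have key (y : ι → 𝕜) : ((∑ i, ‖y i‖ ^ 2 : ℝ) : 𝕜) = star y ⬝ᵥ y := by
    simp [dotProduct, RCLike.conj_mul]
  apply RCLike.ofReal_injective (K := 𝕜)
  rw [key, key, star_mulVec, dotProduct_mulVec, vecMul_vecMul, ← star_eq_conjTranspose,
    Unitary.star_mul_self_of_mem hU, vecMul_one]

theorem Matrix.vecMul_exp_of_vecMul_eq_zero {𝕜 : Type*} [RCLike 𝕜] {A : Matrix ι ι 𝕜}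
    {v : ι → 𝕜} (h : v ᵥ* A = 0) : v ᵥ* NormedSpace.exp A = v := by
  have hA : SemiconjBy (replicateRow ι v) A 0 := by
    rw [SemiconjBy, ← replicateRow_vecMul, h, zero_mul, replicateRow_zero]
  have hexp : replicateRow ι (v ᵥ* NormedSpace.exp A) = replicateRow ι v := by
    -- `SemiconjBy.exp_right` needs some Banach-algebra norm on matrices; any one will do.
    have := open scoped Norms.Operator in hA.exp_right
    rwa [SemiconjBy, NormedSpace.exp_zero, one_mul, ← replicateRow_vecMul] at this
  funext j
  exact congrFun (congrFun hexp j) j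

theorem Matrix.IsHermitian.sum_exp_smul_mulVec {H : Matrix ι ι ℂ} (hH : H.IsHermitian)
    (h1 : H *ᵥ 1 = 0) (c : ℂ) (ψ : ι → ℂ) :
    ∑ z, (NormedSpace.exp (c • H) *ᵥ ψ) z = ∑ z, ψ z := by
  have h1' : 1 ᵥ* H = 0 := by
    rw [← star_one, ← hH.eq, ← star_mulVec, h1, star_zero]
  rw [← one_dotProduct, ← one_dotProduct, dotProduct_mulVec,
    vecMul_exp_of_vecMul_eq_zero (by rw [vecMul_smul, h1', smul_zero])]

theorem Matrix.exp_smul_diagonal_mulVec (c : ℂ) (d ψ : ι → ℂ) :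
    NormedSpace.exp (c • diagonal d) *ᵥ ψ = fun z => Complex.exp (c * d z) * ψ z := by
  funext z
  rw [← diagonal_smul, exp_diagonal, mulVec_diagonal, Pi.coe_exp, Complex.exp_eq_exp_ℂ]
  rfl

end Matrix

open ComplexConjugate in
theorem Complex.norm_add_sq_le_norm_add_mul_sq_add {e : ℂ} (he : ‖e‖ = 1) (q r : ℂ) :
    ‖q + r‖ ^ 2 ≤ ‖q + e * r‖ ^ 2 + 2 * ‖e - 1‖ * ‖q‖ * ‖r‖ := by
  set w := q * conj r * conj (e - 1)
  have hdiff : ‖q + e * r‖ ^ 2 - ‖q + r‖ ^ 2 = 2 * w.re := by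
    have hnormSq_e : normSq e = 1 := by rw [← Complex.sq_norm, he, one_pow]
    simp only [Complex.sq_norm, normSq_add, hnormSq_e, w, map_mul, map_sub, map_one]
    simp only [mul_re, sub_re, one_re, sub_im, one_im, mul_im]
    ring
  have hw : ‖w‖ = ‖q‖ * ‖r‖ * ‖e - 1‖ := by simp only [w, norm_mul, norm_conj]
  nlinarith [neg_abs_le w.re, abs_re_le_norm w]

theorem norm_sum_le_sqrt_card_mul {ι : Type*} (s : Finset ι) (x : ι → ℂ) :
    ‖∑ i ∈ s, x i‖ ≤ √(#s * ∑ i ∈ s, ‖x i‖ ^ 2) :=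
  Real.le_sqrt_of_sq_le <| (pow_le_pow_left₀ (norm_nonneg _) (norm_sum_le s x) 2).trans
    sq_sum_le_card_mul_sum_sq

section Overlap

variable {ι : Type*} [Fintype ι] [DecidableEq ι]

theorem two_mul_norm_sum_mul_norm_sum_compl_le (s : Finset ι) (x : ι → ℂ) :
    2 * ‖∑ i ∈ s, x i‖ * ‖∑ i ∈ sᶜ, x i‖ ≤ √(#s * #sᶜ) * ∑ i, ‖x i‖ ^ 2 := by
  set u := ∑ i ∈ s, ‖x i‖ ^ 2
  set w := ∑ i ∈ sᶜ, ‖x i‖ ^ 2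
  have hu : 0 ≤ u := by positivity
  have hw : 0 ≤ w := by positivity
  calc 2 * ‖∑ i ∈ s, x i‖ * ‖∑ i ∈ sᶜ, x i‖
      ≤ 2 * √(#s * u) * √(#sᶜ * w) := by
        gcongr <;> exact norm_sum_le_sqrt_card_mul _ x
    _ = √(#s * #sᶜ) * (2 * √u * √w) := by
        rw [Real.sqrt_mul (by positivity), Real.sqrt_mul (by positivity),
          Real.sqrt_mul (by positivity)]
        ring
    _ ≤ √(#s * #sᶜ) * (u + w) := by
        gcongr
        nlinarith [Real.sq_sqrt hu, Real.sq_sqrt hw, sq_nonneg (√u - √w)]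
    _ = √(#s * #sᶜ) * ∑ i, ‖x i‖ ^ 2 := by rw [sum_add_sum_compl]

theorem norm_sum_sq_le_of_sum_norm_sq_eq_one (s : Finset ι) {x : ι → ℂ}
    (hx : ∑ i, ‖x i‖ ^ 2 = 1) {lam : ℝ} (hlam : ∑ i ∈ s, ‖x i‖ ^ 2 = lam) :
    ‖∑ i, x i‖ ^ 2 ≤ #s * lam + #sᶜ * (1 - lam) + 2 * √(lam * (1 - lam) * #s * #sᶜ) := by
  have hcompl : ∑ i ∈ sᶜ, ‖x i‖ ^ 2 = 1 - lam := by
    rw [← hx, ← hlam, ← sum_add_sum_compl s]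
    ring
  have hlam0 : 0 ≤ lam := hlam ▸ by positivity
  have hlam1 : 0 ≤ 1 - lam := hcompl ▸ by positivity
  have hle : ‖∑ i, x i‖ ≤ √(#s * lam) + √(#sᶜ * (1 - lam)) := by
    rw [← hcompl, ← hlam, ← sum_add_sum_compl s]
    exact (norm_add_le _ _).trans
      (add_le_add (norm_sum_le_sqrt_card_mul _ x) (norm_sum_le_sqrt_card_mul _ x))
  calc ‖∑ i, x i‖ ^ 2 ≤ (√(#s * lam) + √(#sᶜ * (1 - lam))) ^ 2 := by gcongr
    _ = _ := by
      rw [add_sq, Real.sq_sqrt (by positivity), Real.sq_sqrt (by positivity), mul_assoc 2,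
        ← Real.sqrt_mul (by positivity),
        show #s * lam * (#sᶜ * (1 - lam)) = lam * (1 - lam) * #s * #sᶜ by ring]
      ring

end Overlap

section QAOA

variable {ι : Type*} [DecidableEq ι]

/-- The phase Hamiltonian `H₁ = I - H_C` of the search problem with marked set `S`. -/
def unmarkedProjector (S : Finset ι) : Matrix ι ι ℂ :=
  diagonal fun z => if z ∈ S then 0 else 1

theorem isHermitian_unmarkedProjector (S : Finset ι) : (unmarkedProjector S).IsHermitian :=
  isHermitian_diagonal_of_self_adjoint _ (by ext z; by_cases hz : z ∈ S <;> simp [hz])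

variable [Fintype ι]

theorem qaoaState_zero (H0 H1 : Matrix ι ι ℂ) (β γ : Fin 0 → ℝ) (ψ0 : ι → ℂ) :
    qaoaState H0 H1 0 β γ ψ0 = ψ0 := by
  simp [qaoaState]

theorem qaoaState_succ (H0 H1 : Matrix ι ι ℂ) {p : ℕ} (β γ : Fin (p + 1) → ℝ) (ψ0 : ι → ℂ) :
    qaoaState H0 H1 (p + 1) β γ ψ0 =
      NormedSpace.exp ((-(β (Fin.last p) : ℂ) * I) • H0) *ᵥ
        NormedSpace.exp ((-(γ (Fin.last p) : ℂ) * I) • H1) *ᵥ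
          qaoaState H0 H1 p (β ∘ Fin.castSucc) (γ ∘ Fin.castSucc) ψ0 := by
  simp only [qaoaState, List.ofFn_succ, List.prod_cons, mulVec_mulVec, Matrix.mul_assoc,
    Fin.rev_zero, Fin.rev_succ, Function.comp_apply]

theorem sum_norm_sq_qaoaState {H0 H1 : Matrix ι ι ℂ} (hH0 : H0.IsHermitian)
    (hH1 : H1.IsHermitian) (p : ℕ) (β γ : Fin p → ℝ) (ψ0 : ι → ℂ) :
    ∑ z, ‖qaoaState H0 H1 p β γ ψ0 z‖ ^ 2 = ∑ z, ‖ψ0 z‖ ^ 2 := by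
  refine sum_norm_sq_mulVec_of_mem_unitary (list_prod_mem fun U hU => ?_) ψ0
  obtain ⟨j, rfl⟩ := List.mem_ofFn.mp hU
  exact mul_mem (hH0.exp_neg_mul_I_smul_mem_unitary _) (hH1.exp_neg_mul_I_smul_mem_unitary _)

theorem norm_sum_sq_le_norm_sum_exp_unmarkedProjector_mulVec_sq_add (S : Finset ι) (γ : ℝ)
    (ψ : ι → ℂ) :
    ‖∑ z, ψ z‖ ^ 2 ≤
      ‖∑ z, (NormedSpace.exp ((-(γ : ℂ) * I) • unmarkedProjector S) *ᵥ ψ) z‖ ^ 2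
        + |γ| * √(#S * #Sᶜ) * ∑ z, ‖ψ z‖ ^ 2 := by
  set e := Complex.exp (I * (-γ : ℝ))
  set q := ∑ z ∈ S, ψ z
  set r := ∑ z ∈ Sᶜ, ψ z
  have hsum : ∑ z, (NormedSpace.exp ((-(γ : ℂ) * I) • unmarkedProjector S) *ᵥ ψ) z =
      q + e * r := by
    rw [unmarkedProjector, exp_smul_diagonal_mulVec, ← sum_add_sum_compl S, mul_sum]
    congr 1 <;> refine sum_congr rfl fun z hz => ?_
    · simp [hz]
    · simp [mem_compl.mp hz, e, mul_comm I]
  have he1 : ‖e - 1‖ ≤ |γ| :=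
    Real.norm_exp_I_mul_ofReal_sub_one_le.trans_eq (by rw [Real.norm_eq_abs, abs_neg])
  have hqr := two_mul_norm_sum_mul_norm_sum_compl_le S ψ
  rw [hsum, ← sum_add_sum_compl S ψ]
  calc ‖q + r‖ ^ 2 ≤ ‖q + e * r‖ ^ 2 + ‖e - 1‖ * (2 * ‖q‖ * ‖r‖) :=
        (norm_add_sq_le_norm_add_mul_sq_add (norm_exp_I_mul_ofReal _) q r).trans_eq (by ring)
    _ ≤ ‖q + e * r‖ ^ 2 + |γ| * (√(#S * #Sᶜ) * ∑ z, ‖ψ z‖ ^ 2) := by gcongr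
    _ = _ := by ring

theorem norm_sum_sq_le_norm_sum_qaoaState_sq_add {H0 : Matrix ι ι ℂ} (hH0 : H0.IsHermitian)
    (h1 : H0 *ᵥ 1 = 0) (S : Finset ι) (ψ0 : ι → ℂ) (p : ℕ) (β γ : Fin p → ℝ) :
    ‖∑ z, ψ0 z‖ ^ 2 ≤ ‖∑ z, qaoaState H0 (unmarkedProjector S) p β γ ψ0 z‖ ^ 2
      + (∑ j, |γ j|) * √(#S * #Sᶜ) * ∑ z, ‖ψ0 z‖ ^ 2 := by
  induction p with
  | zero => simp [qaoaState_zero]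
  | succ p ih =>
    have hphase :=
      norm_sum_sq_le_norm_sum_exp_unmarkedProjector_mulVec_sq_add S (γ (Fin.last p))
        (qaoaState H0 (unmarkedProjector S) p (β ∘ Fin.castSucc) (γ ∘ Fin.castSucc) ψ0)
    rw [sum_norm_sq_qaoaState hH0 (isHermitian_unmarkedProjector S)] at hphase
    have hprev := ih (β ∘ Fin.castSucc) (γ ∘ Fin.castSucc)
    simp only [Function.comp_apply] at hprev
    rw [qaoaState_succ, hH0.sum_exp_smul_mulVec h1, Fin.sum_univ_castSucc]
    linarith

end QAOA

theorem qaoa_search_lower_bound_general_mixer_general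
    {N : ℕ} (hN : 2 ≤ N) (S : Finset (Fin N))
    (HC H0 H1 : Matrix (Fin N) (Fin N) ℂ)
    (hHC : HC = Matrix.diagonal fun z => if z ∈ S then (1 : ℂ) else 0)
    (hH1 : H1 = 1 - HC)
    (hH0 : H0.PosSemidef)
    (ψ0 : Fin N → ℂ) (hψ0 : ψ0 = fun _ => ((Real.sqrt N)⁻¹ : ℂ))
    (hground : H0 *ᵥ ψ0 = 0)
    (p : ℕ) (β γ : Fin p → ℝ)
    (hγ : ∀ j, |γ j| ≤ 2 * Real.pi)
    (ψp : Fin N → ℂ) (hψp : ψp = qaoaState H0 H1 p β γ ψ0)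
    (lam : ℝ) (hlam : lam = ∑ z ∈ S, ‖ψp z‖ ^ 2) :
    (p : ℝ) * (2 * Real.pi) * Real.sqrt (S.card * ((N : ℝ) - S.card)) ≥
      lam * ((N : ℝ) - 2 * S.card) + S.card
        - 2 * Real.sqrt (lam * (1 - lam) * S.card * ((N : ℝ) - S.card)) := by
  have : NeZero N := ⟨by omega⟩
  have h1 : H0 *ᵥ 1 = 0 := by
    rw [hψ0, show (fun _ => ((√N)⁻¹ : ℂ)) = ((√N)⁻¹ : ℂ) • 1 by ext; simp, mulVec_smul,
      smul_eq_zero] at hground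
    exact hground.resolve_left (by simp [NeZero.ne N])
  have hH1' : H1 = unmarkedProjector S := by
    rw [hH1, hHC, ← diagonal_one, diagonal_sub, unmarkedProjector]
    congr with z
    by_cases hz : z ∈ S <;> simp [hz]
  have hψ0_norm : ∑ z, ‖ψ0 z‖ ^ 2 = 1 := by simp [hψ0]
  have hψ0_sum : ‖∑ z, ψ0 z‖ ^ 2 = N := by
    simp only [hψ0, sum_const, card_univ, Fintype.card_fin, nsmul_eq_mul, norm_mul, norm_inv,
      RCLike.norm_natCast, norm_real, Real.norm_eq_abs, mul_pow, inv_pow, sq_abs,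
      Real.sq_sqrt (Nat.cast_nonneg N)]
    field_simp
  have hcard : (#Sᶜ : ℝ) = N - #S := by
    rw [card_compl, Fintype.card_fin, Nat.cast_sub (card_le_univ S |>.trans_eq (by simp))]
  have hlow := norm_sum_sq_le_norm_sum_qaoaState_sq_add hH0.isHermitian h1 S ψ0 p β γ
  rw [← hH1', ← hψp, hψ0_norm, hψ0_sum, mul_one, hcard] at hlow
  have hψp_norm : ∑ z, ‖ψp z‖ ^ 2 = 1 := by
    rw [hψp, hH1', sum_norm_sq_qaoaState hH0.isHermitian (isHermitian_unmarkedProjector S),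
      hψ0_norm]
  have hup := norm_sum_sq_le_of_sum_norm_sq_eq_one S hψp_norm hlam.symm
  rw [hcard] at hup
  have hγ_sum : ∑ j, |γ j| ≤ p * (2 * Real.pi) := by
    simpa using sum_le_card_nsmul univ (fun j => |γ j|) _ fun j _ => hγ j
  nlinarith [mul_le_mul_of_nonneg_right hγ_sum (Real.sqrt_nonneg (#S * (N - #S : ℝ)))]

/-- search lower bound for QAOA with an arbitrary mixer whose zero-energy
ground state is the uniform superposition. -/
theorem qaoa_search_lower_bound_general_mixer
    {N : ℕ} (hN : 2 ≤ N) (S : Finset (Fin N))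
    (hm1 : 1 ≤ S.card) (hm2 : S.card ≤ N - 1)
    (HC H0 H1 : Matrix (Fin N) (Fin N) ℂ)
    (hHC : HC = Matrix.diagonal fun z => if z ∈ S then (1 : ℂ) else 0)
    (hH1 : H1 = 1 - HC)
    (hH0 : H0.PosSemidef)
    (ψ0 : Fin N → ℂ) (hψ0 : ψ0 = fun _ => ((Real.sqrt N)⁻¹ : ℂ))
    (hground : H0 *ᵥ ψ0 = 0)
    (p : ℕ) (hp : 1 ≤ p) (β γ : Fin p → ℝ)
    (hγ : ∀ j, |γ j| ≤ 2 * Real.pi)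
    (ψp : Fin N → ℂ) (hψp : ψp = qaoaState H0 H1 p β γ ψ0)
    (lam : ℝ) (hlam : lam = ∑ z ∈ S, ‖ψp z‖ ^ 2) :
    (p : ℝ) * (2 * Real.pi) * Real.sqrt (S.card * ((N : ℝ) - S.card)) ≥
      lam * ((N : ℝ) - 2 * S.card) + S.card
        - 2 * Real.sqrt (lam * (1 - lam) * S.card * ((N : ℝ) - S.card)) :=
  qaoa_search_lower_bound_general_mixer_general hN S HC H0 H1 hHC hH1 hH0 ψ0 hψ0 hground p β γ hγ ψp
    hψp lam hlam
end
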